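/- Let f : ℝ^n → ℝ^n, y₀ ∈ ℝ^n, h ∈ ℝ, and suppose Y₁, Y₂ ∈ ℝ^n satisfy the stage equations of the method Φ with stepsize h/2, i.e. Y_i = y₀ + (h/2)·Σ_j (A1)_{ij} f(Y_j) for i = 1,2, where A1 = [[1/2, 1/2 − √3/3], [1/2 + √3/3, 1/2]]. Set y_{1/2} = y₀ + (h/2)·((1/2 + √3/4) f(Y₁) + (1/2 − √3/4) f(Y₂)). Then: (i) Y₁, Y₂ satisfy the stage equations of the method Ψ with stepsize h/2 started at y_{1/2}, i.e. Y_i = y_{1/2} + (h/2)·Σ_j (A2)_{ij} f(Y_j) where A2 = [[−√3/4, −√3/12], [√3/12, √3/4]]; (ii) Y₁, Y₂ satisfy the stage equations of the Gauss–Legendre order-4 method with stepsize h started at y₀, i.e. Y_i = y₀ + h·Σ_j (A_G)_{ij} f(Y_j) with A_G = [[1/4, 1/4 − √3/6], [1/4 + √3/6, 1/4]]; (iii) the output of the Ψ half-step equals the output of the Gauss–Legendre step: y_{1/2} + (h/2)·((1/2 − √3/4) f(Y₁) + (1/2 + √3/4) f(Y₂)) = y₀ + h·((1/2) f(Y₁)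 + (1/2) f(Y₂)). -/
import Mathlib


/-- Coefficient matrix of the method Φ. -/
noncomputable def phiA : Fin 2 → Fin 2 → ℝ :=
  ![![1/2, 1/2 - Real.sqrt 3/3], ![1/2 + Real.sqrt 3/3, 1/2]]

/-- Coefficient matrix of the method Ψ. -/
noncomputable def psiA : Fin 2 → Fin 2 → ℝ :=
  ![![-Real.sqrt 3/4, -Real.sqrt 3/12], ![Real.sqrt 3/12, Real.sqrt 3/4]]

/-- Coefficient matrix of the 2-stage Gauss–Legendre method of order 4. -/
noncomputable def gaussA : Fin 2 → Fin 2 → ℝ :=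
  ![![1/4, 1/4 - Real.sqrt 3/6], ![1/4 + Real.sqrt 3/6, 1/4]]

theorem stmt3 {n : ℕ} (f : (Fin n → ℝ) → (Fin n → ℝ)) (y0 : Fin n → ℝ) (h : ℝ)
    (Y : Fin 2 → Fin n → ℝ)
    (hY : ∀ i, Y i = y0 + (h/2) • ∑ j, phiA i j • f (Y j))
    (y12 : Fin n → ℝ)
    (hy12 : y12 = y0 + (h/2) • ((1/2 + Real.sqrt 3/4) • f (Y 0)
                                + (1/2 - Real.sqrt 3/4) • f (Y 1))) :
    (∀ i, Y i = y12 + (h/2) • ∑ j, psiA i j • f (Y j)) ∧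
    (∀ i, Y i = y0 + h • ∑ j, gaussA i j • f (Y j)) ∧
    y12 + (h/2) • ((1/2 - Real.sqrt 3/4) • f (Y 0) + (1/2 + Real.sqrt 3/4) • f (Y 1))
      = y0 + h • ((1/2 : ℝ) • f (Y 0) + (1/2 : ℝ) • f (Y 1)) := by
  have h0 := hY 0
  have h1 := hY 1
  simp only [phiA, Fin.sum_univ_two, Matrix.cons_val_zero, Matrix.cons_val_one,
    Matrix.head_cons] at h0 h1
  refine ⟨fun i => ?_, fun i => ?_, ?_⟩
  · have : i = 0 ∨ i = 1 := by omega
    rcases this with rfl | rfl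
    · simp only [psiA, Fin.sum_univ_two, Matrix.cons_val_zero, Matrix.cons_val_one,
        Matrix.head_cons]
      conv_lhs => rw [h0]
      rw [hy12]; module
    · simp only [psiA, Fin.sum_univ_two, Matrix.cons_val_zero, Matrix.cons_val_one,
        Matrix.head_cons]
      conv_lhs => rw [h1]
      rw [hy12]; module
  · have : i = 0 ∨ i = 1 := by omega
    rcases this with rfl | rfl
    · simp only [gaussA, Fin.sum_univ_two, Matrix.cons_val_zero, Matrix.cons_val_one,
        Matrix.head_cons]
      conv_lhs => rw [h0]
      module
    · simp only [gaussA, Fin.sum_univ_two, Matrix.cons_val_zero, Matrix.cons_val_one,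
        Matrix.head_cons]
      conv_lhs => rw [h1]
      module
  · rw [hy12]; module
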